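/- For every integer m with 1 ≤ m ≤ 99, P(X_{2m+1} < 0 | X_1 < 0) = 1/2 + (1/2^{2m+1}) · C(2m, m), where C(2m, m) is the binomial coefficient and the conditioning event X_1 < 0 has probability 1/2 > 0. -/

import Mathlib

/-!
Almost surely every `C j` is `±1`, and then `1 - X k = 1.01 ^ b * 0.99 ^ (k - b)`, where `b`
counts the indices `j ≤ k` with `C j = -1`. For `k = 2m + 1` and `m ≤ 99` this product exceeds
`1` exactly when `b ≥ m + 1`, because `(1.01 * 0.99) ^ 99 * 1.01 > 1` (this already fails for
`m = 100`). Independence makes the sign pattern of `C 1, …, C k` uniform over the `2 ^ k` subsets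
of `{1, …, k}`, so the conditional probability is the proportion of subsets of `{2, …, 2m + 1}`
with at least `m` elements. Complementation matches those with the subsets of at most `m`
elements, and the two families overlap in the `C(2m, m)` subsets of size exactly `m`.
-/

open MeasureTheory ProbabilityTheory Finset

theorem card_filter_mem_powerset_insert {α : Type*} [DecidableEq α] {a : α} {t : Finset α}
    (ha : a ∉ t) (p : Finset α → Prop) [DecidablePred p] :
    #{F ∈ (insert a t).powerset | a ∈ F ∧ p F} = #{G ∈ t.powerset | p (insert a G)} := by
  symm
  apply card_nbij' (insert a) (·.erase a)
  all_goals
    intro F hF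
    simp only [mem_coe, mem_filter, mem_powerset] at hF ⊢
  · exact ⟨insert_subset_insert a hF.1, mem_insert_self a F, hF.2⟩
  · exact ⟨subset_insert_iff.1 hF.1, (insert_erase hF.2.1).symm ▸ hF.2.2⟩
  · exact erase_insert fun h => ha (hF.1 h)
  · exact insert_erase hF.2.1

theorem two_mul_card_filter_powerset_le_card {α : Type*} [DecidableEq α] {s : Finset α} {n : ℕ}
    (hs : #s = 2 * n) :
    2 * #{G ∈ s.powerset | n ≤ #G} = 2 ^ (2 * n) + (2 * n).choose n := by
  have hsymm : #{G ∈ s.powerset | n ≤ #G} = #{G ∈ s.powerset | #G ≤ n} := by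
    apply card_nbij' (s \ ·) (s \ ·)
    all_goals
      intro G hG
      simp only [mem_coe, mem_filter, mem_powerset] at hG ⊢
    · exact ⟨sdiff_subset, by rw [card_sdiff_of_subset hG.1]; omega⟩
    · exact ⟨sdiff_subset, by rw [card_sdiff_of_subset hG.1]; omega⟩
    · exact Finset.sdiff_sdiff_eq_self hG.1
    · exact Finset.sdiff_sdiff_eq_self hG.1
  have hunion : {G ∈ s.powerset | n ≤ #G} ∪ {G ∈ s.powerset | #G ≤ n} = s.powerset := by
    rw [← filter_or, filter_true_of_mem fun G _ => le_total n #G]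
  have hinter :
      {G ∈ s.powerset | n ≤ #G} ∩ {G ∈ s.powerset | #G ≤ n} = s.powersetCard n := by
    rw [← filter_and, powersetCard_eq_filter]
    exact filter_congr fun G _ => by omega
  have := card_union_add_card_inter {G ∈ s.powerset | n ≤ #G} {G ∈ s.powerset | #G ≤ n}
  rw [hunion, hinter, card_powerset, card_powersetCard, hs, ← hsymm] at this
  omega

theorem two_mul_card_filter_powerset_Icc_one_mem (m : ℕ) :
    2 * #{F ∈ (Icc 1 (2 * m + 1)).powerset | 1 ∈ F ∧ m + 1 ≤ #F} =
      2 ^ (2 * m) + (2 * m).choose m := by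
  rw [← insert_Icc_add_one_left_eq_Icc (by omega), card_filter_mem_powerset_insert (by simp),
    ← two_mul_card_filter_powerset_le_card (s := Icc (1 + 1) (2 * m + 1)) (by simp)]
  congr 2
  refine filter_congr fun G hG => ?_
  rw [card_insert_of_notMem fun h => by simpa using mem_powerset.1 hG h]
  omega

theorem toReal_inv_half_mul_card_mul_half_pow {m N : ℕ}
    (hN : 2 * N = 2 ^ (2 * m) + (2 * m).choose m) :
    (((1 : ENNReal) / 2)⁻¹ * (N * (1 / 2) ^ (2 * m + 1))).toReal =
      1 / 2 + 1 / 2 ^ (2 * m + 1) * (2 * m).choose m := by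
  have hN' : (2 * N : ℝ) = 2 ^ (2 * m) + (2 * m).choose m := by exact_mod_cast hN
  simp only [ENNReal.toReal_mul, ENNReal.toReal_inv, ENNReal.toReal_div, ENNReal.toReal_pow,
    ENNReal.toReal_natCast, ENNReal.toReal_one, ENNReal.toReal_ofNat]
  rw [one_div, inv_pow, pow_succ]
  field_simp
  linear_combination hN'

theorem one_add_pow_mul_one_sub_pow_lt_one {δ : ℝ} (hδ₀ : 0 < δ) (hδ₁ : δ ≤ 1)
    {a b : ℕ} (hba : b < a) : (1 + δ) ^ b * (1 - δ) ^ a < 1 := by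
  obtain ⟨d, rfl⟩ := Nat.exists_eq_add_of_lt hba
  calc (1 + δ) ^ b * (1 - δ) ^ (b + d + 1) = ((1 + δ) * (1 - δ)) ^ b * (1 - δ) ^ (d + 1) := by
        rw [mul_pow]; ring
    _ < 1 := mul_lt_one_of_nonneg_of_lt_one_right (pow_le_one₀ (by nlinarith) (by nlinarith))
        (by positivity) (pow_lt_one₀ (by linarith) (by linarith) (by omega))

theorem one_lt_one_add_pow_mul_one_sub_pow {a b : ℕ} (ha : a ≤ 99) (hab : a < b) :
    1 < (1 + 0.01 : ℝ) ^ b * (1 - 0.01) ^ a := by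
  obtain ⟨d, rfl⟩ := Nat.exists_eq_add_of_lt hab
  calc (1 : ℝ) < ((1 + 0.01) * (1 - 0.01)) ^ 99 * (1 + 0.01) ^ 1 := by norm_num
    _ ≤ ((1 + 0.01) * (1 - 0.01)) ^ a * (1 + 0.01) ^ (d + 1) :=
      mul_le_mul (pow_le_pow_of_le_one (by norm_num) (by norm_num) ha)
        (pow_le_pow_right₀ (by norm_num) (by omega)) (by positivity) (by positivity)
    _ = (1 + 0.01 : ℝ) ^ (a + d + 1) * (1 - 0.01) ^ a := by rw [mul_pow]; ring

theorem one_lt_one_add_pow_mul_one_sub_pow_iff {m a b : ℕ} (hm : m ≤ 99)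
    (hab : a + b = 2 * m + 1) :
    1 < (1 + 0.01 : ℝ) ^ b * (1 - 0.01) ^ a ↔ m + 1 ≤ b := by
  refine ⟨fun h => ?_, fun h => one_lt_one_add_pow_mul_one_sub_pow (by omega) (by omega)⟩
  by_contra hb
  exact (one_add_pow_mul_one_sub_pow_lt_one (by norm_num) (by norm_num) (by omega)).not_gt h

theorem prod_one_sub_mul_of_sign {ι : Type*} (s : Finset ι) (c : ι → ℝ) (δ : ℝ)
    (hc : ∀ j ∈ s, c j = 1 ∨ c j = -1) :
    ∏ j ∈ s, (1 - δ * c j) =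
      (1 + δ) ^ #{j ∈ s | c j = -1} * (1 - δ) ^ #{j ∈ s | c j ≠ -1} := by
  rw [← prod_filter_mul_prod_filter_not s (c · = -1), ← prod_const, ← prod_const]
  congr 1 <;> refine prod_congr rfl fun j hj => ?_ <;> rw [mem_filter] at hj
  · rw [hj.2]; ring
  · rw [(hc j hj.1).resolve_right hj.2]; ring

theorem one_sub_prod_lt_zero_iff {m : ℕ} (hm : m ≤ 99) {c : ℕ → ℝ}
    (hc : ∀ j ∈ Icc 1 (2 * m + 1), c j = 1 ∨ c j = -1) :
    1 - ∏ j ∈ Icc 1 (2 * m + 1), (1 - 0.01 * c j) < 0 ↔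
      m + 1 ≤ #{j ∈ Icc 1 (2 * m + 1) | c j = -1} := by
  have hcard : #{j ∈ Icc 1 (2 * m + 1) | c j = -1} + #{j ∈ Icc 1 (2 * m + 1) | c j ≠ -1} =
      2 * m + 1 := by
    rw [card_filter_add_card_filter_not, Nat.card_Icc]; omega
  rw [prod_one_sub_mul_of_sign _ _ _ hc, sub_neg,
    one_lt_one_add_pow_mul_one_sub_pow_iff hm (by omega)]

section FairSigns

variable {Ω ι : Type*}

noncomputable def negIndices (s : Finset ι) (C : ι → Ω → ℝ) (ω : Ω) : Finset ι :=
  {j ∈ s | C j ω = -1}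

theorem negIndices_preimage_singleton [DecidableEq ι] {s F : Finset ι} (C : ι → Ω → ℝ)
    (hF : F ⊆ s) :
    negIndices s C ⁻¹' {F} = ⋂ j ∈ s, C j ⁻¹' (if j ∈ F then {-1} else {-1}ᶜ) := by
  ext ω
  simp only [Set.mem_preimage, Set.mem_singleton_iff, Set.mem_iInter, negIndices]
  constructor
  · rintro rfl j hj
    by_cases h : C j ω = -1 <;> simp [hj, h]
  · intro h
    ext j
    by_cases hj : j ∈ s
    · have := h j hj
      split_ifs at this with hjF <;> simp_all
    · exact iff_of_false (fun h => hj (mem_filter.1 h).1) fun h => hj (hF h)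

variable [MeasurableSpace Ω] {μ : Measure Ω} [IsProbabilityMeasure μ]

theorem ae_eq_one_or_eq_neg_one {Y : Ω → ℝ} (hY : Measurable Y)
    (hHead : μ {ω | Y ω = 1} = 1 / 2) (hTail : μ {ω | Y ω = -1} = 1 / 2) :
    ∀ᵐ ω ∂μ, Y ω = 1 ∨ Y ω = -1 := by
  have hm (v : ℝ) : MeasurableSet {ω | Y ω = v} := hY (measurableSet_singleton v)
  have hdisj : Disjoint {ω | Y ω = 1} {ω | Y ω = -1} :=
    Set.disjoint_left.2 fun ω (h1 : Y ω = 1) (h2 : Y ω = -1) => by norm_num [h1] at h2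
  refine (prob_compl_eq_zero_iff ((hm 1).union (hm (-1)))).2 ?_
  rw [measure_union hdisj (hm (-1)), hHead, hTail, ENNReal.add_halves]

variable {C : ι → Ω → ℝ}

theorem measurableSet_negIndices_preimage_singleton (hMeas : ∀ j, Measurable (C j))
    {s F : Finset ι} (hF : F ⊆ s) : MeasurableSet (negIndices s C ⁻¹' {F}) := by
  classical
  rw [negIndices_preimage_singleton C hF]
  exact s.measurableSet_biInter fun j _ => by split_ifs <;> measurability

theorem measure_negIndices_preimage_singleton (hMeas : ∀ j, Measurable (C j))
    (hIndep : iIndepFun C μ) (hTail : ∀ j, μ {ω | C j ω = -1} = 1 / 2)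
    {s F : Finset ι} (hF : F ⊆ s) : μ (negIndices s C ⁻¹' {F}) = (1 / 2) ^ #s := by
  classical
  have hfactor : ∀ j ∈ s, μ (C j ⁻¹' (if j ∈ F then {-1} else {-1}ᶜ)) = 1 / 2 := by
    intro j _
    split_ifs
    · exact hTail j
    · rw [Set.preimage_compl, prob_compl_eq_one_sub (hMeas j (measurableSet_singleton _))]
      change 1 - μ {ω | C j ω = -1} = _
      rw [hTail j, one_div, ENNReal.one_sub_inv_two]
  rw [negIndices_preimage_singleton C hF,
    hIndep.measure_inter_preimage_eq_mul s fun j _ => by split_ifs <;> measurability,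
    prod_congr rfl hfactor, prod_const]

theorem measure_negIndices_preimage (hMeas : ∀ j, Measurable (C j))
    (hIndep : iIndepFun C μ) (hTail : ∀ j, μ {ω | C j ω = -1} = 1 / 2)
    {s : Finset ι} {𝒜 : Finset (Finset ι)} (h𝒜 : 𝒜 ⊆ s.powerset) :
    μ (negIndices s C ⁻¹' 𝒜) = #𝒜 * (1 / 2) ^ #s := by
  rw [← sum_measure_preimage_singleton _ fun F hF =>
      measurableSet_negIndices_preimage_singleton hMeas (mem_powerset.1 (h𝒜 hF)),
    sum_congr rfl fun F hF =>
      measure_negIndices_preimage_singleton hMeas hIndep hTail (mem_powerset.1 (h𝒜 hF)),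
    sum_const, nsmul_eq_mul]

end FairSigns

/-- For the CPDO net capital driven by i.i.d. fair signs with `δ = 0.01`:
the conditioning event `{X 1 < 0}` has probability `1/2 > 0`, and for every `1 ≤ m ≤ 99`,
`P(X (2m+1) < 0 | X 1 < 0) = 1/2 + (1/2^(2m+1)) · C(2m, m)`. -/
theorem cpdo_odd_loss_given_first_loss
    {Ω : Type*} [MeasureSpace Ω] [IsProbabilityMeasure (ℙ : Measure Ω)]
    (δ : ℝ) (hδ : δ = 0.01)
    (C : ℕ → Ω → ℝ)
    (hMeas : ∀ j, Measurable (C j))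
    (hIndep : iIndepFun C ℙ)
    (hHead : ∀ j, ℙ {ω | C j ω = 1} = 1/2)
    (hTail : ∀ j, ℙ {ω | C j ω = -1} = 1/2)
    (X : ℕ → Ω → ℝ)
    (hX : ∀ (k : ℕ) (ω : Ω), X k ω = 1 - ∏ j ∈ Finset.Icc 1 k, (1 - δ * C j ω)) :
    ℙ {ω | X 1 ω < 0} = 1/2 ∧
    ∀ m : ℕ, 1 ≤ m → m ≤ 99 →
      (ℙ[|{ω | X 1 ω < 0}] {ω | X (2 * m + 1) ω < 0}).toReal
        = 1 / 2 + (1 / 2 ^ (2 * m + 1)) * (Nat.choose (2 * m) m : ℝ) := by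
  subst hδ
  have hsign : ∀ᵐ ω, ∀ j, C j ω = 1 ∨ C j ω = -1 :=
    ae_all_iff.2 fun j => ae_eq_one_or_eq_neg_one (hMeas j) (hHead j) (hTail j)
  have hX₁ (ω : Ω) : X 1 ω < 0 ↔ C 1 ω < 0 := by
    rw [hX, Icc_self, prod_singleton]
    constructor <;> intro h <;> linarith
  have hP₁ : ℙ {ω | X 1 ω < 0} = 1 / 2 := by
    rw [← hTail 1]
    refine measure_congr (Filter.eventuallyEq_set.2 ?_)
    filter_upwards [hsign] with ω hω
    rcases hω 1 with h | h <;> norm_num [hX₁, h]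
  refine ⟨hP₁, fun m _ hm99 => ?_⟩
  set s := Icc 1 (2 * m + 1)
  set 𝒜 := {F ∈ s.powerset | 1 ∈ F ∧ m + 1 ≤ #F}
  have hevent : ({ω | X 1 ω < 0} ∩ {ω | X (2 * m + 1) ω < 0} : Set Ω) =ᵐ[ℙ]
      negIndices s C ⁻¹' 𝒜 := by
    refine Filter.eventuallyEq_set.2 ?_
    filter_upwards [hsign] with ω hω
    have h₁ : X 1 ω < 0 ↔ 1 ∈ negIndices s C ω := by
      rcases hω 1 with h | h <;> norm_num [hX₁, negIndices, s, h]
    have h₂ : X (2 * m + 1) ω < 0 ↔ m + 1 ≤ #(negIndices s C ω) := by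
      rw [hX]; exact one_sub_prod_lt_zero_iff hm99 fun j _ => hω j
    simp only [Set.mem_inter_iff, Set.mem_ofPred_eq, Set.mem_preimage, mem_coe, 𝒜, mem_filter,
      mem_powerset, h₁, h₂]
    exact (and_iff_right (filter_subset _ _)).symm
  rw [cond_apply (Set.ext hX₁ ▸ hMeas 1 measurableSet_Iio), hP₁, measure_congr hevent,
    measure_negIndices_preimage hMeas hIndep hTail (filter_subset _ _), Nat.card_Icc,
    Nat.add_sub_cancel]
  exact toReal_inv_half_mul_card_mul_half_pow (two_mul_card_filter_powerset_Icc_one_mem m)
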